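/- arXiv:1506.00502 — 4 statements merged into one kernel-verified Lean document; each statement's English description precedes it below -/
import Mathlib

section
/- Let q > 1, C > 1, α ∈ (0,1), and consider the function f(a) = C(αa + 1 − α)^q − αC·a^q − (1 − α) for a > 0. If α > 1 − C^{−1/(q−1)}, then f has exactly two positive roots, one greater than 1 and one in (0,1). If α ≤ 1 − C^{−1/(q−1)}, then f has exactly one positive root, which is greater than 1. -/
open Set Real

/-- Root analysis of the higher-segment equation f(a) = C(αa+1−α)^q − αC·a^q − (1−α) for the
lens Ω_C^q, q > 1: above the threshold α = 1 − C^{−1/(q−1)} there are exactly two positive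
roots (one in (0,1), one above 1); at or below the threshold exactly one root, above 1. -/
theorem stmt7 (q C α : ℝ) (hq : 1 < q) (hC : 1 < C) (hα : α ∈ Set.Ioo (0 : ℝ) 1)
    (f : ℝ → ℝ) (hf : f = fun a => C * (α * a + 1 - α) ^ q - α * C * a ^ q - (1 - α)) :
    (1 - C ^ (-(1 / (q - 1))) < α →
      ∃ a₁ a₂ : ℝ, a₁ ∈ Set.Ioo (0 : ℝ) 1 ∧ 1 < a₂ ∧ f a₁ = 0 ∧ f a₂ = 0 ∧
        ∀ a : ℝ, 0 < a → f a = 0 → a = a₁ ∨ a = a₂) ∧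
    (α ≤ 1 - C ^ (-(1 / (q - 1))) →
      ∃ a₀ : ℝ, 1 < a₀ ∧ f a₀ = 0 ∧ ∀ a : ℝ, 0 < a → f a = 0 → a = a₀) := by
  obtain ⟨hα0, hα1⟩ := hα
  have ht : (0:ℝ) < 1 - α := by linarith
  have hq1 : (0:ℝ) < q - 1 := by linarith
  have hC0 : (0:ℝ) < C := by linarith
  -- derivative
  have hder : ∀ a : ℝ, HasDerivAt f
      (C * (α * q * (α * a + 1 - α) ^ (q - 1)) - α * C * (q * a ^ (q - 1))) a := by
    intro a
    have h1 : HasDerivAt (fun a : ℝ => α * a + 1 - α) α a := by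
      simpa using (((hasDerivAt_id a).const_mul α).add_const 1).sub_const α
    have h2 := h1.rpow_const (p := q) (Or.inr hq.le)
    have h3 := h2.const_mul C
    have h4 := (Real.hasDerivAt_rpow_const (p := q) (x := a) (Or.inr hq.le)).const_mul (α * C)
    have h5 := (h3.sub h4).sub_const (1 - α)
    rw [hf]
    exact h5
  have hcont : Continuous f := by
    have : Differentiable ℝ f := fun x => (hder x).differentiableAt
    exact this.continuous
  have hf1 : 0 < f 1 := by
    rw [hf]; simp only
    rw [show α * 1 + 1 - α = (1:ℝ) by ring, Real.one_rpow]
    nlinarith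
  have hf0 : f 0 = C * (1 - α) ^ q - (1 - α) := by
    rw [hf]; simp only
    rw [show α * 0 + 1 - α = (1:ℝ) - α by ring,
      Real.zero_rpow (ne_of_gt (by linarith : (0:ℝ) < q))]
    ring
  -- monotone on [0,1]
  have hmono : StrictMonoOn f (Icc 0 1) := by
    apply strictMonoOn_of_deriv_pos (convex_Icc 0 1) hcont.continuousOn
    intro x hx
    rw [interior_Icc] at hx
    rw [(hder x).deriv]
    have hsx : x < α * x + 1 - α := by nlinarith [hx.1, hx.2]
    have hlt : x ^ (q-1) < (α * x + 1 - α) ^ (q-1) :=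
      Real.rpow_lt_rpow hx.1.le hsx hq1
    have he : C * (α * q * (α * x + 1 - α) ^ (q - 1)) - α * C * (q * x ^ (q - 1))
        = α * C * q * ((α * x + 1 - α) ^ (q-1) - x ^ (q-1)) := by ring
    rw [he]
    apply mul_pos (by positivity)
    linarith
  -- anti on [1,∞)
  have hanti : StrictAntiOn f (Ici 1) := by
    apply strictAntiOn_of_deriv_neg (convex_Ici 1) hcont.continuousOn
    intro x hx
    rw [interior_Ici] at hx
    have hx1 : (1:ℝ) < x := hx
    rw [(hder x).deriv]
    have hx0 : (0:ℝ) < x := lt_trans one_pos hx1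
    have hsx : α * x + 1 - α < x := by nlinarith [mul_pos ht (sub_pos.2 hx1)]
    have hs0 : (0:ℝ) < α * x + 1 - α := by nlinarith
    have hlt : (α * x + 1 - α) ^ (q-1) < x ^ (q-1) :=
      Real.rpow_lt_rpow hs0.le hsx hq1
    have he : C * (α * q * (α * x + 1 - α) ^ (q - 1)) - α * C * (q * x ^ (q - 1))
        = α * C * q * ((α * x + 1 - α) ^ (q-1) - x ^ (q-1)) := by ring
    rw [he]
    apply mul_neg_of_pos_of_neg (by positivity)
    linarith
  -- a point b > 1 with f b < 0
  obtain ⟨b, hb1, hfb⟩ : ∃ b : ℝ, 1 < b ∧ f b < 0 := by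
    set s : ℝ := (1 + 1/q)/2 with hs
    have hs1 : s < 1 := by
      have : 1/q < 1 := by rw [div_lt_one (by linarith)]; exact hq
      rw [hs]; linarith
    have hs0 : 0 < s := by positivity
    have hsq : 1 < s * q := by
      have : s * q = (q + 1)/2 := by
        rw [hs, div_mul_eq_mul_div, add_mul, one_div, inv_mul_cancel₀ (by linarith : q ≠ 0)]; ring
      rw [this]; linarith
    set β : ℝ := α ^ s with hβ
    have hβα : α < β := by
      have := Real.rpow_lt_rpow_of_exponent_gt hα0 hα1 hs1
      simpa [Real.rpow_one] using this
    have hβ1 : β ^ q < α := by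
      have h1 : β ^ q = α ^ (s * q) := by
        rw [hβ, ← Real.rpow_mul hα0.le]
      rw [h1]
      have := Real.rpow_lt_rpow_of_exponent_gt hα0 hα1 hsq
      simpa [Real.rpow_one] using this
    have hβ0 : 0 < β := Real.rpow_pos_of_pos hα0 _
    refine ⟨max 1 ((1-α)/(β-α)) + 1,
      by have := le_max_left (1:ℝ) ((1-α)/(β-α)); linarith, ?_⟩
    set b : ℝ := max 1 ((1-α)/(β-α)) + 1 with hbdef
    have hb0 : (0:ℝ) < b := by
      have := le_max_left (1:ℝ) ((1-α)/(β-α)); simp only [hbdef]; linarith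
    have hble : α * b + 1 - α ≤ β * b := by
      have h2 : (1-α)/(β-α) ≤ b := by
        simp only [hbdef]; linarith [le_max_right (1:ℝ) ((1-α)/(β-α))]
      have h3 : (1-α)/(β-α) * (β-α) ≤ b * (β-α) :=
        mul_le_mul_of_nonneg_right h2 (by linarith)
      rw [div_mul_cancel₀ _ (by linarith : β - α ≠ 0)] at h3
      nlinarith
    have hb2 : (0:ℝ) ≤ α * b + 1 - α := by nlinarith
    have key : (α * b + 1 - α) ^ q ≤ (β * b) ^ q :=
      Real.rpow_le_rpow hb2 hble (by linarith)
    have hmr : (β * b) ^ q = β ^ q * b ^ q := Real.mul_rpow hβ0.le hb0.le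
    have hbq : (0:ℝ) < b ^ q := Real.rpow_pos_of_pos hb0 _
    rw [hf]; simp only
    have h6 := mul_le_mul_of_nonneg_left key hC0.le
    have h7 := mul_lt_mul_of_pos_left hβ1 (mul_pos hC0 hbq)
    rw [hmr] at h6
    nlinarith
  -- root above 1
  obtain ⟨a₂, ha₂, hfa₂⟩ : ∃ a₂ ∈ Ioo 1 b, f a₂ = 0 := by
    have h := intermediate_value_Ioo' hb1.le hcont.continuousOn (a := 1) (b := b)
    obtain ⟨x, hx, hfx⟩ := h ⟨hfb, hf1⟩
    exact ⟨x, hx, hfx⟩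
  -- threshold iff
  have hthresh : 1 - C ^ (-(1 / (q - 1))) < α ↔ f 0 < 0 := by
    rw [hf0]
    have hCu : (0:ℝ) < C ^ (-(1/(q-1))) := Real.rpow_pos_of_pos hC0 _
    have hP : (0:ℝ) < (1-α) ^ (q-1) := Real.rpow_pos_of_pos ht _
    have key : 1 - α < C ^ (-(1/(q-1))) ↔ C * (1-α) ^ q < 1 - α := by
      rw [← Real.rpow_lt_rpow_iff ht.le hCu.le hq1, ← Real.rpow_mul hC0.le]
      rw [show -(1/(q-1)) * (q-1) = (-1:ℝ) by field_simp, Real.rpow_neg_one]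
      have hq' : (1-α) ^ q = (1-α) ^ (q-1) * (1-α) := by
        rw [← Real.rpow_add_one (by linarith : (1:ℝ) - α ≠ 0)]
        ring_nf
      rw [hq']
      constructor
      · intro h
        have h2 : C * (1-α)^(q-1) < 1 := by
          have h3 := mul_lt_mul_of_pos_left h hC0
          rwa [mul_inv_cancel₀ hC0.ne'] at h3
        have h4 := mul_lt_mul_of_pos_right h2 ht
        linear_combination h4
      · intro h
        have h2 : C * (1-α)^(q-1) < 1 :=
          lt_of_mul_lt_mul_right (by linear_combination h) ht.le
        have h3 : C * (1-α)^(q-1) < C * C⁻¹ := by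
          rw [mul_inv_cancel₀ hC0.ne']; exact h2
        exact lt_of_mul_lt_mul_left h3 hC0.le
    constructor
    · intro h; have := key.mp (by linarith); linarith
    · intro h; have := key.mpr (by linarith); linarith
  constructor
  · intro hcase
    have hf0neg : f 0 < 0 := hthresh.mp hcase
    obtain ⟨a₁, ha₁, hfa₁⟩ : ∃ a₁ ∈ Ioo (0:ℝ) 1, f a₁ = 0 := by
      have h := intermediate_value_Ioo (le_of_lt one_pos) hcont.continuousOn (a := 0) (b := 1)
      obtain ⟨x, hx, hfx⟩ := h ⟨hf0neg, hf1⟩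
      exact ⟨x, hx, hfx⟩
    refine ⟨a₁, a₂, ha₁, ha₂.1, hfa₁, hfa₂, ?_⟩
    intro a ha hfa
    rcases lt_trichotomy a 1 with h | h | h
    · left
      exact hmono.injOn ⟨ha.le, h.le⟩ ⟨ha₁.1.le, ha₁.2.le⟩ (by rw [hfa, hfa₁])
    · exfalso; rw [h] at hfa; linarith
    · right
      exact hanti.injOn (mem_Ici.2 h.le) (mem_Ici.2 ha₂.1.le) (by rw [hfa, hfa₂])
  · intro hcase
    have hf0nn : 0 ≤ f 0 := by
      by_contra hneg
      push_neg at hneg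
      have := hthresh.mpr hneg
      linarith
    refine ⟨a₂, ha₂.1, hfa₂, ?_⟩
    intro a ha hfa
    rcases lt_trichotomy a 1 with h | h | h
    · exfalso
      have := hmono (left_mem_Icc.2 one_pos.le) ⟨ha.le, h.le⟩ ha
      rw [hfa] at this
      linarith
    · exfalso; rw [h] at hfa; linarith
    · exact hanti.injOn (mem_Ici.2 h.le) (mem_Ici.2 ha₂.1.le) (by rw [hfa, hfa₂])
end

section
/- Let C > 1, q > 1, α ∈ (1 − C^{−1/(q−1)}, 1), and let a ∈ (0,1) satisfy C(αa + 1 − α)^q = αC·a^q + (1 − α). Define C' = ((1 − C·a^q)^q·(q−1)^{q−1}) / ((1 − a)·(a − C·a^q)^{q−1}·q^q). Consider the segment in ℝ² from x = (a, C·a^q) to y = (1, 1). Then the maximum of t₂/t₁^q over points (t₁,t₂) on this segment equals C', attained at an interior point, and in particular C' > C. -/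
open Set Real

/-!
Write `b = C a^q`. The root equation says that the chord from `(a, b)` to `(1, 1)` meets the
strictly convex curve `t ↦ C t^q` a second time, at `m = αa + 1 - α > a`; hence the chord is
steeper than the curve at `a`: `q b / a < (1 - b) / (1 - a)`.

Along the chord, `t₂ / t₁^q ≤ c` says that the chord lies below `t ↦ c t^q`. The least such `c`
is the one for which `c t^q` is tangent to the chord, and solving the tangency equations gives the
point `t₁ = q (a - b) / ((1 - b)(q - 1))` and `c = C'`. The slope inequality, together with
Bernoulli's inequality `1 - b < 1 - a^q ≤ q (1 - a)`, puts `t₁` strictly inside `(a, 1)`.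
Since a tangent line lies below `c t^q`, strictly away from the point of tangency, `C'` is the
maximum, it is attained at `t₁`, and `b < C' a^q`, i.e. `C < C'`.
-/

lemma rpow_tangent_lt {q x y : ℝ} (hq : 1 < q) (hx : 0 < x) (hy : 0 ≤ y) (hyx : y ≠ x) :
    x ^ q + q * x ^ (q - 1) * (y - x) < y ^ q := by
  have hB := one_add_mul_self_lt_rpow_one_add (s := (y - x) / x)
    (by rw [le_div_iff₀ hx]; linarith) (div_ne_zero (sub_ne_zero.mpr hyx) hx.ne') hq
  rw [add_div' _ _ _ hx.ne', one_mul, add_sub_cancel, div_rpow hy hx.le,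
    lt_div_iff₀ (by positivity)] at hB
  rw [rpow_sub_one hx.ne']
  calc x ^ q + q * (x ^ q / x) * (y - x) = (1 + q * ((y - x) / x)) * x ^ q := by field_simp
    _ < y ^ q := hB

lemma rpow_tangent_le {q x y : ℝ} (hq : 1 < q) (hx : 0 < x) (hy : 0 ≤ y) :
    x ^ q + q * x ^ (q - 1) * (y - x) ≤ y ^ q := by
  rcases eq_or_ne y x with rfl | hyx
  · simp
  · exact (rpow_tangent_lt hq hx hy hyx).le

lemma mul_rpow_deriv_lt_of_chord {q c a m k : ℝ} (hq : 1 < q) (hc : 0 < c) (ha : 0 < a)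
    (ham : a < m) (hchord : c * m ^ q = c * a ^ q + k * (m - a)) :
    c * (q * a ^ (q - 1)) < k := by
  have h := mul_lt_mul_of_pos_left (rpow_tangent_lt hq ha (ha.trans ham).le ham.ne') hc
  have : c * (q * a ^ (q - 1)) * (m - a) < k * (m - a) := by linarith
  exact lt_of_mul_lt_mul_right this (sub_pos.mpr ham).le

lemma le_fst_and_snd_eq_of_mem_segment {x₁ x₂ y₁ y₂ : ℝ} (h : x₁ < y₁) {p : ℝ × ℝ}
    (hp : p ∈ segment ℝ (x₁, x₂) (y₁, y₂)) :
    x₁ ≤ p.1 ∧ p.2 = x₂ + (y₂ - x₂) / (y₁ - x₁) * (p.1 - x₁) := by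
  rw [segment_eq_image'] at hp
  obtain ⟨θ, ⟨hθ, -⟩, rfl⟩ := hp
  simp only [Prod.fst_add, Prod.snd_add, Prod.smul_fst, Prod.smul_snd, Prod.fst_sub,
    Prod.snd_sub, smul_eq_mul]
  refine ⟨by nlinarith, ?_⟩
  field_simp [(sub_pos.mpr h).ne']
  ring

lemma mk_mem_openSegment_of_mem_Ioo {x₁ x₂ y₁ y₂ t : ℝ} (ht : t ∈ Ioo x₁ y₁) :
    (t, x₂ + (y₂ - x₂) / (y₁ - x₁) * (t - x₁)) ∈ openSegment ℝ (x₁, x₂) (y₁, y₂) := by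
  have hxy : 0 < y₁ - x₁ := by linarith [ht.1, ht.2]
  rw [openSegment_eq_image']
  refine ⟨(t - x₁) / (y₁ - x₁), ⟨div_pos (by linarith [ht.1]) hxy,
    (div_lt_one hxy).mpr (by linarith [ht.2])⟩, ?_⟩
  ext
  · simp only [Prod.fst_add, Prod.smul_fst, Prod.fst_sub, smul_eq_mul]
    rw [div_mul_cancel₀ _ hxy.ne', add_sub_cancel]
  · simp only [Prod.snd_add, Prod.smul_snd, Prod.snd_sub, smul_eq_mul]
    field_simp

noncomputable def segmentArgmax (q a b : ℝ) : ℝ := q * (a - b) / ((1 - b) * (q - 1))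

noncomputable def segmentMaxRatio (q a b : ℝ) : ℝ :=
  ((1 - b) ^ q * (q - 1) ^ (q - 1)) / ((1 - a) * (a - b) ^ (q - 1) * q ^ q)

section
variable {q a b : ℝ}

lemma segmentArgmax_pos (hq : 1 < q) (ha1 : a < 1) (hba : b < a) : 0 < segmentArgmax q a b := by
  unfold segmentArgmax
  have : 0 < 1 - b := by linarith
  have : 0 < q - 1 := by linarith
  have : 0 < a - b := by linarith
  positivity

lemma segmentArgmax_mem_Ioo (hq : 1 < q) (ha1 : a < 1) (hba : b < a)
    (hslope : q * b * (1 - a) < a * (1 - b)) (hsteep : 1 - b < q * (1 - a)) :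
    segmentArgmax q a b ∈ Ioo a 1 := by
  have : 0 < (1 - b) * (q - 1) := mul_pos (by linarith) (by linarith)
  rw [segmentArgmax, mem_Ioo, lt_div_iff₀ this, div_lt_one this]
  constructor <;> linarith

lemma segmentMaxRatio_pos (hq : 1 < q) (ha1 : a < 1) (hba : b < a) :
    0 < segmentMaxRatio q a b := by
  unfold segmentMaxRatio
  have : 0 < 1 - b := by linarith
  have : 0 < 1 - a := by linarith
  have : 0 < q - 1 := by linarith
  have : 0 < a - b := by linarith
  positivity

lemma chord_eq_tangent_segmentMaxRatio (hq : 1 < q) (ha1 : a < 1) (hba : b < a) (t : ℝ) :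
    b + (1 - b) / (1 - a) * (t - a) = segmentMaxRatio q a b * (segmentArgmax q a b ^ q +
      q * segmentArgmax q a b ^ (q - 1) * (t - segmentArgmax q a b)) := by
  have h1b : 0 < 1 - b := by linarith
  have h1a : 0 < 1 - a := by linarith
  have hq1 : 0 < q - 1 := by linarith
  have hab : 0 < a - b := by linarith
  have ht₁ := segmentArgmax_pos hq ha1 hba
  have hval :
      segmentMaxRatio q a b * segmentArgmax q a b ^ q = (a - b) / ((1 - a) * (q - 1)) := by
    rw [segmentMaxRatio, segmentArgmax, div_rpow (by positivity) (by positivity),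
      mul_rpow (by positivity) hab.le, mul_rpow h1b.le hq1.le, rpow_sub_one hab.ne',
      rpow_sub_one hq1.ne']
    field_simp
  have hderiv :
      segmentMaxRatio q a b * (q * segmentArgmax q a b ^ (q - 1)) = (1 - b) / (1 - a) :=
    calc _ = q * (segmentMaxRatio q a b * segmentArgmax q a b ^ q) / segmentArgmax q a b := by
          rw [rpow_sub_one ht₁.ne']; ring
      _ = (1 - b) / (1 - a) := by rw [hval, segmentArgmax]; field_simp
  have hchord :
      b + (1 - b) / (1 - a) * (segmentArgmax q a b - a) = (a - b) / ((1 - a) * (q - 1)) := by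
    rw [segmentArgmax]; field_simp; ring
  linear_combination hchord - hval - (t - segmentArgmax q a b) * hderiv

lemma isGreatest_segmentMaxRatio (hq : 1 < q) (ha : 0 < a) (ha1 : a < 1) (hb : 0 < b)
    (hslope : q * b * (1 - a) < a * (1 - b)) (hsteep : 1 - b < q * (1 - a)) :
    IsGreatest ((fun p : ℝ × ℝ => p.2 / p.1 ^ q) '' segment ℝ (a, b) (1, 1))
        (segmentMaxRatio q a b) ∧
      (∃ p ∈ openSegment ℝ (a, b) (1, 1), p.2 / p.1 ^ q = segmentMaxRatio q a b) ∧
      b < segmentMaxRatio q a b * a ^ q := by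
  have hba : b < a := by nlinarith [mul_pos (mul_pos (sub_pos.2 hq) hb) (sub_pos.2 ha1)]
  have ht₁ := segmentArgmax_mem_Ioo hq ha1 hba hslope hsteep
  have ht₁0 := segmentArgmax_pos hq ha1 hba
  have hc := segmentMaxRatio_pos hq ha1 hba
  have htangent := chord_eq_tangent_segmentMaxRatio hq ha1 hba
  have hmem := mk_mem_openSegment_of_mem_Ioo (x₂ := b) (y₂ := 1) ht₁
  have hval : (b + (1 - b) / (1 - a) * (segmentArgmax q a b - a)) / segmentArgmax q a b ^ q =
      segmentMaxRatio q a b := by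
    rw [htangent, sub_self, mul_zero, add_zero, mul_div_cancel_right₀ _ (by positivity)]
  refine ⟨⟨⟨_, openSegment_subset_segment _ _ _ hmem, hval⟩, ?_⟩, ⟨_, hmem, hval⟩, ?_⟩
  · rintro _ ⟨p, hp, rfl⟩
    obtain ⟨hp1, hp2⟩ := le_fst_and_snd_eq_of_mem_segment ha1 hp
    have hp0 : 0 < p.1 := ha.trans_le hp1
    rw [div_le_iff₀ (by positivity), hp2, htangent]
    exact mul_le_mul_of_nonneg_left (rpow_tangent_le hq ht₁0 hp0.le) hc.le
  · have h := mul_lt_mul_of_pos_left (rpow_tangent_lt hq ht₁0 ha.le ht₁.1.ne) hc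
    linarith [htangent a]

end

lemma deriv_lt_chordSlope_of_root {C q α a : ℝ} (hq : 1 < q) (hC : 0 < C) (hα : α < 1)
    (ha : a ∈ Ioo 0 1)
    (hroot : C * (α * a + 1 - α) ^ q = α * C * a ^ q + (1 - α)) :
    q * (C * a ^ q) * (1 - a) < a * (1 - C * a ^ q) := by
  obtain ⟨ha0, ha1⟩ := ha
  have h1a : 0 < 1 - a := by linarith
  have hm : a < α * a + 1 - α := by nlinarith
  have hchord : C * (α * a + 1 - α) ^ q =
      C * a ^ q + (1 - C * a ^ q) / (1 - a) * (α * a + 1 - α - a) := by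
    rw [hroot]; field_simp; ring
  have h := mul_rpow_deriv_lt_of_chord hq hC ha0 hm hchord
  rw [rpow_sub_one ha0.ne', lt_div_iff₀ h1a] at h
  have := mul_lt_mul_of_pos_left h ha0
  field_simp at this
  linarith

/-- For q > 1, C > 1, α above the threshold, and a ∈ (0,1) a root of the higher-segment
equation, the maximum of t₂/t₁^q along the segment from x = (a, Ca^q) to y = (1,1) equals
C' = ((1−Ca^q)^q(q−1)^{q−1})/((1−a)(a−Ca^q)^{q−1}q^q), attained at an interior point;
in particular C' > C. -/
theorem stmt12 (C q α a : ℝ) (hC : 1 < C) (hq : 1 < q)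
    (hα : α ∈ Set.Ioo (1 - C ^ (-(1 / (q - 1)))) 1)
    (ha : a ∈ Set.Ioo (0 : ℝ) 1)
    (hroot : C * (α * a + 1 - α) ^ q = α * C * a ^ q + (1 - α))
    (C' : ℝ)
    (hC' : C' = ((1 - C * a ^ q) ^ q * (q - 1) ^ (q - 1)) /
      ((1 - a) * (a - C * a ^ q) ^ (q - 1) * q ^ q)) :
    IsGreatest ((fun p : ℝ × ℝ => p.2 / p.1 ^ q) ''
        segment ℝ ((a, C * a ^ q) : ℝ × ℝ) ((1, 1) : ℝ × ℝ)) C' ∧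
    (∃ p ∈ openSegment ℝ ((a, C * a ^ q) : ℝ × ℝ) ((1, 1) : ℝ × ℝ),
        p.2 / p.1 ^ q = C') ∧
    C < C' := by
  have hslope := deriv_lt_chordSlope_of_root hq (by linarith) hα.2 ha hroot
  obtain ⟨ha0, ha1⟩ := ha
  have haq : 0 < a ^ q := by positivity
  have hsteep : 1 - C * a ^ q < q * (1 - a) := by
    have hB := one_add_mul_self_le_rpow_one_add (s := a - 1) (by linarith) hq.le
    rw [add_sub_cancel] at hB
    nlinarith
  obtain ⟨hmax, hattained, hlt⟩ :=
    isGreatest_segmentMaxRatio hq ha0 ha1 (by positivity) hslope hsteep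
  subst hC'
  exact ⟨hmax, hattained, lt_of_mul_lt_mul_right hlt haq.le⟩
end

section
/- Let α ∈ (0,1), C ≥ 1, and C' = (C(α+1)² − (α−1)²)/(4α). For the A₂ lens Ω_C = {(x₁,x₂) : x₁,x₂ > 0, 1 ≤ x₁x₂ ≤ C}: if y = (y₁, 1/y₁) is on the fixed boundary (x₁x₂ = 1), x = (x₁, C/x₁) is on the free boundary (x₁x₂ = C), z = αx + (1−α)y also lies on the free boundary, and x₁ > y₁, then the maximum of s·t over (s,t) ∈ [x,y] equals C'. -/
open Set

/-- For the A₂ lens {1 ≤ x₁x₂ ≤ C}: if y = (y₁,1/y₁) lies on the fixed boundary,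
x = (x₁,C/x₁) lies on the free boundary, z = αx + (1−α)y also lies on the free boundary,
and x₁ > y₁, then the maximum of the product s·t over points (s,t) of the segment [x,y]
equals C' = (C(α+1)² − (α−1)²)/(4α). -/
theorem stmt14 (α C : ℝ) (hα : α ∈ Set.Ioo (0 : ℝ) 1) (hC : 1 ≤ C)
    (C' : ℝ) (hC' : C' = (C * (α + 1) ^ 2 - (α - 1) ^ 2) / (4 * α))
    (y₁ x₁ : ℝ) (hy₁ : 0 < y₁) (hx₁ : 0 < x₁) (hxy : y₁ < x₁)
    (x y z : ℝ × ℝ) (hx : x = (x₁, C / x₁)) (hy : y = (y₁, 1 / y₁))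
    (hz : z = α • x + (1 - α) • y) (hzfree : z.1 * z.2 = C) :
    IsGreatest ((fun p : ℝ × ℝ => p.1 * p.2) '' segment ℝ x y) C' := by
  obtain ⟨hα0, hα1⟩ := hα
  have hx1 : x₁ ≠ 0 := ne_of_gt hx₁
  have hy1 : y₁ ≠ 0 := ne_of_gt hy₁
  have hαne : α ≠ 0 := ne_of_gt hα0
  have h1α : (1:ℝ) - α ≠ 0 := ne_of_gt (by linarith)
  subst hz hx hy hC'
  have key : (α * x₁ + (1 - α) * y₁) * (α * C * y₁ + (1 - α) * x₁) = C * x₁ * y₁ := by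
    have h : (α * x₁ + (1 - α) * y₁) * (α * (C / x₁) + (1 - α) * (1 / y₁)) = C := hzfree
    field_simp at h
    nlinarith [h]
  have hK : α * (x₁ ^ 2 + C * y₁ ^ 2) = (C * (1 + α) - (1 - α)) * (x₁ * y₁) := by
    have h2 : (1 - α) * (α * (x₁ ^ 2 + C * y₁ ^ 2))
        = (1 - α) * ((C * (1 + α) - (1 - α)) * (x₁ * y₁)) := by linear_combination key
    exact mul_left_cancel₀ h1α h2
  have heq : ∀ a : ℝ, (a * x₁ + (1 - a) * y₁) * (a * C * y₁ + (1 - a) * x₁) * (4 * α)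
      = (C * (α + 1) ^ 2 - (α - 1) ^ 2) * (x₁ * y₁)
        - (C - 1) * (x₁ * y₁) * (2 * a - 1 - α) ^ 2 := by
    intro a
    linear_combination (4 * a * (1 - a)) * hK
  have hform : ∀ a : ℝ, (a * x₁ + (1 - a) * y₁) * (a * (C / x₁) + (1 - a) * (1 / y₁))
      = ((a * x₁ + (1 - a) * y₁) * (a * C * y₁ + (1 - a) * x₁)) / (x₁ * y₁) := by
    intro a; field_simp
  constructor
  · refine ⟨((1 + α)/2) • (x₁, C/x₁) + ((1 - α)/2) • (y₁, 1/y₁), ?_, ?_⟩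
    · exact ⟨(1 + α)/2, (1 - α)/2, by linarith, by linarith, by ring, rfl⟩
    · show (((1 + α)/2) * x₁ + ((1 - α)/2) * y₁) * (((1 + α)/2) * (C / x₁) + ((1 - α)/2) * (1 / y₁))
        = (C * (α + 1) ^ 2 - (α - 1) ^ 2) / (4 * α)
      have h := heq ((1 + α)/2)
      have h2 := hform ((1 + α)/2)
      rw [show (1 : ℝ) - (1 + α)/2 = (1 - α)/2 by ring] at h h2
      rw [h2, div_eq_div_iff (by positivity) (by positivity)]
      linear_combination h + (C - 1) * (x₁ * y₁) * (by ring : (2 * ((1 + α)/2) - 1 - α) ^ 2 = 0)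
  · rintro v ⟨p, hp, rfl⟩
    obtain ⟨a, b, ha, hb, hab, rfl⟩ := hp
    show (a * x₁ + b * y₁) * (a * (C / x₁) + b * (1 / y₁)) ≤ (C * (α + 1) ^ 2 - (α - 1) ^ 2) / (4 * α)
    have hb' : b = 1 - a := by linarith
    subst hb'
    rw [hform a, div_le_div_iff₀ (by positivity) (by positivity)]
    nlinarith [heq a, mul_nonneg (mul_nonneg (sub_nonneg.2 hC) (mul_pos hx₁ hy₁).le) (sq_nonneg (2 * a - 1 - α))]
end

section
/- Let α ∈ (0,1), ε > 0, ε' = ((1+α)/(2√α))·ε. Every 'higher segment' of Ω_ε = {(x₁,x₂) : x₁² ≤ x₂ ≤ x₁² + ε²} is contained in Ω_{ε'}. Concretely: if x and z lie on the parabola x₂ = x₁² + ε², y lies on x₂ = x₁², z = αx + (1−α)y, and the segment [z,y] ⊂ Ω_ε, then [x,y] ⊂ Ω_{ε'} = {(x₁,x₂) : x₁² ≤ x₂ ≤ x₁² + ε'²}. -/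
open Set Real

/-!
Write `d = x₁ - y₁`. Along a chord of the parabola the vertical gap `p₂ - p₁²` is affine in the
endpoint gaps plus the correction `a b d²`. Applied at `z = αx + (1-α)y`, where all three gaps are
known, this forces `α d² = ε²`; applied at `a x + (1-a) y` it gives the gap `a (1 + α - a) d²`,
which is at most `((1+α)/2)² d² = ε'²`.
-/

lemma snd_sub_fst_sq_add_smul (x y : ℝ × ℝ) {a b : ℝ} (hab : a + b = 1) :
    (a • x + b • y).2 - (a • x + b • y).1 ^ 2
      = a * (x.2 - x.1 ^ 2) + b * (y.2 - y.1 ^ 2) + a * b * (x.1 - y.1) ^ 2 := by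
  obtain rfl : b = 1 - a := by linarith
  simp only [Prod.fst_add, Prod.snd_add, Prod.smul_fst, Prod.smul_snd, smul_eq_mul]
  ring

lemma mul_sq_fst_sub_eq_of_higher {α ε : ℝ} (hα : α ≠ 1) {x y : ℝ × ℝ}
    (hx : x.2 = x.1 ^ 2 + ε ^ 2) (hy : y.2 = y.1 ^ 2)
    (hz : (α • x + (1 - α) • y).2 = (α • x + (1 - α) • y).1 ^ 2 + ε ^ 2) :
    α * (x.1 - y.1) ^ 2 = ε ^ 2 := by
  have hgap := snd_sub_fst_sq_add_smul x y (add_sub_cancel α 1)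
  rw [hz, hx, hy] at hgap
  have : (1 - α) * (α * (x.1 - y.1) ^ 2 - ε ^ 2) = 0 := by linear_combination -hgap
  linarith [(mul_eq_zero.mp this).resolve_left (sub_ne_zero.mpr hα.symm)]

lemma segment_subset_parabolic_strip {α : ℝ} (hα : 0 ≤ α) {x y : ℝ × ℝ}
    (hx : x.2 = x.1 ^ 2 + α * (x.1 - y.1) ^ 2) (hy : y.2 = y.1 ^ 2) :
    segment ℝ x y ⊆
      {p : ℝ × ℝ | p.1 ^ 2 ≤ p.2 ∧ p.2 ≤ p.1 ^ 2 + ((1 + α) / 2) ^ 2 * (x.1 - y.1) ^ 2} := by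
  rintro _ ⟨a, b, ha, hb, hab, rfl⟩
  have hgap := snd_sub_fst_sq_add_smul x y hab
  rw [hx, hy] at hgap
  obtain rfl : b = 1 - a := by linarith
  have hd := sq_nonneg (x.1 - y.1)
  constructor
  · nlinarith [mul_nonneg ha hα, mul_nonneg ha hb]
  · nlinarith [mul_nonneg (sq_nonneg (a - (1 + α) / 2)) hd]

theorem stmt17_general (α ε : ℝ) (hα : α ∈ Set.Ioo (0 : ℝ) 1)
    (ε' : ℝ) (hε' : ε' = ((1 + α) / (2 * Real.sqrt α)) * ε)
    (x y z : ℝ × ℝ)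
    (hx : x.2 = x.1 ^ 2 + ε ^ 2) (hz : z.2 = z.1 ^ 2 + ε ^ 2) (hy : y.2 = y.1 ^ 2)
    (hcomb : z = α • x + (1 - α) • y) :
    segment ℝ x y ⊆ {p : ℝ × ℝ | p.1 ^ 2 ≤ p.2 ∧ p.2 ≤ p.1 ^ 2 + ε' ^ 2} := by
  obtain ⟨hα0, hα1⟩ := hα
  have hwidth : α * (x.1 - y.1) ^ 2 = ε ^ 2 :=
    mul_sq_fst_sub_eq_of_higher hα1.ne hx hy (hcomb ▸ hz)
  have hε'sq : ε' ^ 2 = ((1 + α) / 2) ^ 2 * (x.1 - y.1) ^ 2 := by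
    rw [hε', mul_pow, div_pow, mul_pow, sq_sqrt hα0.le, ← hwidth]
    field_simp
  rw [hε'sq]
  exact segment_subset_parabolic_strip hα0.le (hwidth ▸ hx) hy

/-- Every higher segment of the parabolic strip Ω_ε is contained in Ω_{ε'} with
ε' = ((1+α)/(2√α))ε: if x and z = αx + (1−α)y lie on the upper parabola x₂ = x₁² + ε²,
y lies on the lower parabola x₂ = x₁², and [z,y] ⊆ Ω_ε, then [x,y] ⊆ Ω_{ε'}. -/
theorem stmt17 (α ε : ℝ) (hα : α ∈ Set.Ioo (0 : ℝ) 1) (hε : 0 < ε)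
    (ε' : ℝ) (hε' : ε' = ((1 + α) / (2 * Real.sqrt α)) * ε)
    (x y z : ℝ × ℝ)
    (hx : x.2 = x.1 ^ 2 + ε ^ 2) (hz : z.2 = z.1 ^ 2 + ε ^ 2) (hy : y.2 = y.1 ^ 2)
    (hcomb : z = α • x + (1 - α) • y)
    (hseg : segment ℝ z y ⊆ {p : ℝ × ℝ | p.1 ^ 2 ≤ p.2 ∧ p.2 ≤ p.1 ^ 2 + ε ^ 2}) :
    segment ℝ x y ⊆ {p : ℝ × ℝ | p.1 ^ 2 ≤ p.2 ∧ p.2 ≤ p.1 ^ 2 + ε' ^ 2} :=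
  stmt17_general α ε hα ε' hε' x y z hx hz hy hcomb
end
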